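/- Let X be a 1-hyperbolic geodesic metric space, let A and B be nonempty 4-quasiconvex subsets of X, and let [a,b] be a bridge between A and B with d(a,b) ≥ 100. Let a' ∈ A and b' ∈ B. Then: (1) the concatenation of geodesic segments [a', a], [a, b], [b, b'] is a (1, 50)-quasigeodesic, and it is 50-Hausdorff close to any geodesic segment [a', b']; (2) if d(a', b') ≤ d(A, B) + R, then d(a, a') ≤ R + 50 and d(b, b') ≤ R + 50. -/
import Mathlib


noncomputable section

namespace KW

open Metric Set Pointwise

variable {X : Type*} [MetricSpace X]

/-- `s` is (the image of) a unit-speed geodesic segment joining `x` to `y`. -/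
def IsGeodesicSegment (s : Set X) (x y : X) : Prop :=
  ∃ (b : ℝ) (f : ℝ → X), 0 ≤ b ∧ f 0 = x ∧ f b = y ∧
    (∀ u ∈ Set.Icc (0 : ℝ) b, ∀ v ∈ Set.Icc (0 : ℝ) b, dist (f u) (f v) = |u - v|) ∧
    s = f '' Set.Icc 0 b

/-- A geodesic metric space. -/
def GeodesicSpace (X : Type*) [MetricSpace X] : Prop :=
  ∀ x y : X, ∃ s : Set X, IsGeodesicSegment s x y

/-- `X` is `δ`-hyperbolic: geodesic, and every geodesic triangle is `δ`-thin. -/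
def DeltaHyperbolic (δ : ℝ) (X : Type*) [MetricSpace X] : Prop :=
  GeodesicSpace X ∧
    ∀ (x y z : X) (s₁ s₂ s₃ : Set X),
      IsGeodesicSegment s₁ x y → IsGeodesicSegment s₂ y z → IsGeodesicSegment s₃ x z →
      ∀ p ∈ s₁, ∃ q ∈ s₂ ∪ s₃, dist p q ≤ δ

/-- `A` is an `ε`-quasiconvex subset of `X`. -/
def Quasiconvex (ε : ℝ) (A : Set X) : Prop :=
  ∀ x ∈ A, ∀ y ∈ A, ∀ s : Set X, IsGeodesicSegment s x y → ∀ p ∈ s, ∃ a ∈ A, dist p a ≤ ε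

/-- The Gromov product `(y,z)_x`. -/
def gromov (x y z : X) : ℝ := (dist y x + dist z x - dist y z) / 2

def IsGeodesicRay (γ : ℝ → X) : Prop :=
  ∀ s t : ℝ, 0 ≤ s → 0 ≤ t → dist (γ s) (γ t) = |s - t|

def IsBiGeodesic (γ : ℝ → X) : Prop :=
  ∀ s t : ℝ, dist (γ s) (γ t) = |s - t|

/-- `A` and `B` are `K`-Hausdorff close. -/
def HClose (K : ℝ) (A B : Set X) : Prop :=
  (∀ a ∈ A, ∃ b ∈ B, dist a b ≤ K) ∧ ∀ b ∈ B, ∃ a ∈ A, dist a b ≤ K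

def HausdorffClose (A B : Set X) : Prop := ∃ K : ℝ, HClose K A B

/-- Two geodesic rays are asymptotic iff their images are Hausdorff close. -/
def Asymptotic (γ γ' : ℝ → X) : Prop :=
  HausdorffClose (γ '' Set.Ici 0) (γ' '' Set.Ici 0)

def GRay (X : Type*) [MetricSpace X] : Type _ := {γ : ℝ → X // IsGeodesicRay γ}

theorem asymptotic_refl (γ : ℝ → X) : Asymptotic γ γ :=
  ⟨0, fun a ha => ⟨a, ha, by simp⟩, fun b hb => ⟨b, hb, by simp⟩⟩

theorem asymptotic_symm {γ γ' : ℝ → X} (h : Asymptotic γ γ') : Asymptotic γ' γ := by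
  obtain ⟨K, h₁, h₂⟩ := h
  refine ⟨K, fun a ha => ?_, fun b hb => ?_⟩
  · obtain ⟨b, hb, hd⟩ := h₂ a ha
    exact ⟨b, hb, by rwa [dist_comm]⟩
  · obtain ⟨a, ha, hd⟩ := h₁ b hb
    exact ⟨a, ha, by rwa [dist_comm]⟩

theorem asymptotic_trans {γ₁ γ₂ γ₃ : ℝ → X} (h : Asymptotic γ₁ γ₂)
    (h' : Asymptotic γ₂ γ₃) : Asymptotic γ₁ γ₃ := by
  obtain ⟨K, h₁, h₂⟩ := h
  obtain ⟨K', h₁', h₂'⟩ := h'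
  refine ⟨K + K', fun a ha => ?_, fun c hc => ?_⟩
  · obtain ⟨b, hb, hab⟩ := h₁ a ha
    obtain ⟨c, hc, hbc⟩ := h₁' b hb
    exact ⟨c, hc, (dist_triangle a b c).trans (by linarith)⟩
  · obtain ⟨b, hb, hbc⟩ := h₂' c hc
    obtain ⟨a, ha, hab⟩ := h₂ b hb
    exact ⟨a, ha, (dist_triangle a b c).trans (by linarith)⟩

def raySetoid (X : Type*) [MetricSpace X] : Setoid (GRay X) where
  r γ γ' := Asymptotic γ.1 γ'.1
  iseqv := ⟨fun γ => asymptotic_refl γ.1, fun h => asymptotic_symm h,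
    fun h h' => asymptotic_trans h h'⟩

/-- The (geodesic) boundary of `X`: asymptoty classes of geodesic rays. -/
def Boundary (X : Type*) [MetricSpace X] : Type _ := Quotient (raySetoid X)

def Boundary.mk {X : Type*} [MetricSpace X] (γ : GRay X) : Boundary X :=
  Quotient.mk (raySetoid X) γ

/-- A strongly geodesic metric space. -/
def StronglyGeodesic (X : Type*) [MetricSpace X] : Prop :=
  GeodesicSpace X ∧
  (∀ γ : ℝ → X, IsGeodesicRay γ → ∀ y : X,
      ∃ γ' : ℝ → X, IsGeodesicRay γ' ∧ γ' 0 = y ∧ Asymptotic γ γ') ∧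
  (∀ γ₁ γ₂ : ℝ → X, IsGeodesicRay γ₁ → IsGeodesicRay γ₂ → γ₁ 0 = γ₂ 0 →
      ¬ Asymptotic γ₁ γ₂ →
      ∃ γ : ℝ → X, IsBiGeodesic γ ∧
        HausdorffClose (Set.range γ) (γ₁ '' Set.Ici 0 ∪ γ₂ '' Set.Ici 0)) ∧
  (∀ (x : X) (u : ℕ → X),
      (∀ M : ℝ, ∃ N : ℕ, ∀ n, N ≤ n → ∀ m, N ≤ m → M ≤ gromov x (u n) (u m)) →
      ∃ γ : ℝ → X, IsGeodesicRay γ ∧ γ 0 = x ∧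
        ∀ M : ℝ, ∃ N : ℕ, ∀ n, N ≤ n → ∀ m, N ≤ m → M ≤ gromov x (γ (n : ℝ)) (u m))

/-- The sequence `u` converges to the boundary point `p`, with basepoint `x`. -/
def SeqConvTo (x : X) (u : ℕ → X) (p : Boundary X) : Prop :=
  ∃ γ : GRay X, Boundary.mk γ = p ∧
    ∀ M : ℝ, ∃ N : ℕ, ∀ n, N ≤ n → ∀ m, N ≤ m → M ≤ gromov x (u n) (γ.1 (m : ℝ))

/-- `γ` is a geodesic ray in the class of the boundary point `p`. -/
def RayTo (γ : ℝ → X) (p : Boundary X) : Prop :=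
  ∃ h : IsGeodesicRay γ, Boundary.mk ⟨γ, h⟩ = p

/-- `γ` is a biinfinite geodesic whose two ends converge to `p` and `q`. -/
def BiGeodesicJoins (γ : ℝ → X) (p q : Boundary X) : Prop :=
  IsBiGeodesic γ ∧ SeqConvTo (γ 0) (fun n => γ (-(n : ℝ))) p ∧
    SeqConvTo (γ 0) (fun n => γ (n : ℝ)) q

/-- `s` is (the image of) a geodesic joining two points of `X ∪ ∂X`. -/
def JoinSet : X ⊕ Boundary X → X ⊕ Boundary X → Set X → Prop
  | Sum.inl x, Sum.inl y, s => IsGeodesicSegment s x y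
  | Sum.inl x, Sum.inr p, s => ∃ γ : ℝ → X, γ 0 = x ∧ RayTo γ p ∧ s = γ '' Set.Ici 0
  | Sum.inr p, Sum.inl x, s => ∃ γ : ℝ → X, γ 0 = x ∧ RayTo γ p ∧ s = γ '' Set.Ici 0
  | Sum.inr p, Sum.inr q, s => ∃ γ : ℝ → X, BiGeodesicJoins γ p q ∧ s = Set.range γ

/-- The convex hull `Conv(A)` of a subset `A ⊆ X ∪ ∂X`. -/
def geoConv (A : Set (X ⊕ Boundary X)) : Set X :=
  {x | (∃ a : X, A = {Sum.inl a} ∧ x = a) ∨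
    ∃ p ∈ A, ∃ q ∈ A, p ≠ q ∧ ∃ s : Set X, JoinSet p q s ∧ x ∈ s}

/-- The distance between two subsets of `X`. -/
def setDist (A B : Set X) : ℝ := sInf (Set.image2 dist A B)

/-- `a` is a projection of `p` on `A` (relative to `δ`). -/
def IsProjection (δ : ℝ) (A : Set X) (p a : X) : Prop :=
  a ∈ A ∧ ∀ a' ∈ A, dist p a ≤ dist p a' + δ

/-- `f` restricted to `[0,L]` is a unit-speed geodesic from `x` to `y`. -/
def GeodParam (f : ℝ → X) (L : ℝ) (x y : X) : Prop :=
  0 ≤ L ∧ f 0 = x ∧ f L = y ∧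
    ∀ u ∈ Set.Icc (0 : ℝ) L, ∀ v ∈ Set.Icc (0 : ℝ) L, dist (f u) (f v) = |u - v|

/-- Concatenation of three paths, the first on `[0,a]`, the second on `[0,b]`. -/
def concat3 (f₁ f₂ f₃ : ℝ → X) (a b : ℝ) : ℝ → X := fun t =>
  if t ≤ a then f₁ t else if t ≤ a + b then f₂ (t - a) else f₃ (t - a - b)

/-- `f` is a `(lam, ε)`-quasigeodesic on `[a,b]`. -/
def QuasigeodesicOn (lam ε : ℝ) (f : ℝ → X) (a b : ℝ) : Prop :=
  ∀ s ∈ Set.Icc a b, ∀ t ∈ Set.Icc a b, |s - t| ≤ lam * dist (f s) (f t) + ε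

/-- The action of `G` on `X` is by isometries. -/
def IsometricAction (G Y : Type*) [Group G] [MetricSpace Y] [MulAction G Y] : Prop :=
  ∀ (g : G) (x y : Y), dist (g • x) (g • y) = dist x y

section GroupAction

variable {G : Type*} [Group G]

/-- The limit set `Λ(U) ⊆ ∂X` of a subgroup `U ≤ G`. -/
def limitSet (X : Type*) [MetricSpace X] [MulAction G X] (U : Subgroup G) :
    Set (Boundary X) :=
  {p | ∃ x₀ : X, ∃ u : ℕ → U, SeqConvTo x₀ (fun n => ((u n : G)) • x₀) p}

/-- The small displacement set `E(U)` (relative to `δ`). -/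
def smallDispSet (X : Type*) [MetricSpace X] [MulAction G X] (δ : ℝ) (U : Subgroup G) :
    Set X :=
  {x | ∃ u : G, u ∈ U ∧ u ≠ 1 ∧ dist x (u • x) ≤ 100 * δ}

/-- `Z(U) = Conv(Λ(U) ∪ E(U))`. -/
def ZSet (X : Type*) [MetricSpace X] [MulAction G X] (δ : ℝ) (U : Subgroup G) : Set X :=
  geoConv (Sum.inr '' limitSet X U ∪ Sum.inl '' smallDispSet X δ U)

/-- The convex hull `X(U)`: the closure of `Conv(Z(U))`. -/
def cHull (X : Type*) [MetricSpace X] [MulAction G X] (δ : ℝ) (U : Subgroup G) : Set X :=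
  closure (geoConv (Sum.inl '' ZSet X δ U))

/-- The weak convex hull `X_U = Conv(Λ(U))`. -/
def weakHull (X : Type*) [MetricSpace X] [MulAction G X] (U : Subgroup G) : Set X :=
  geoConv (Sum.inr '' limitSet X U)

/-- `l_V(g) = d(X(V), gX(V))`. -/
def lV (X : Type*) [MetricSpace X] [MulAction G X] (δ : ℝ) (V : Subgroup G) (g : G) : ℝ :=
  setDist (cHull X δ V) (g • cHull X δ V)

/-- The translation length of `g`. -/
def translationLength (X : Type*) [MetricSpace X] [MulAction G X] (g : G) : ℝ :=
  sInf (Set.range fun x : X => dist x (g • x))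

/-- The asymptotic translation length of `g`. -/
def asympTranslationLength (X : Type*) [MetricSpace X] [MulAction G X] (g : G) : ℝ :=
  Filter.liminf (fun n : ℕ => translationLength X (g ^ n) / (n : ℝ)) Filter.atTop

/-- An elementary move between `G`-tuples `(U₁,…,U_n; h₁,…,h_m)`. -/
def gMove {n m : ℕ} (M M' : (Fin n → Subgroup G) × (Fin m → G)) : Prop :=
  (M'.2 = M.2 ∧ ∃ (j : Fin n) (g : G),
      g ∈ Subgroup.closure (Set.range M.2 ∪ ⋃ i ∈ {i : Fin n | i ≠ j}, ((M.1 i : Set G))) ∧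
      (∀ i, i ≠ j → M'.1 i = M.1 i) ∧
      M'.1 j = Subgroup.map (MulAut.conj g).toMonoidHom (M.1 j)) ∨
  (M'.1 = M.1 ∧ ∃ (i : Fin m) (g₁ g₂ : G),
      g₁ ∈ Subgroup.closure (M.2 '' {j : Fin m | j ≠ i} ∪ ⋃ t, ((M.1 t : Set G))) ∧
      g₂ ∈ Subgroup.closure (M.2 '' {j : Fin m | j ≠ i} ∪ ⋃ t, ((M.1 t : Set G))) ∧
      (∀ j, j ≠ i → M'.2 j = M.2 j) ∧
      M'.2 i = g₁ * M.2 i * g₂)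

/-- Equivalence of `G`-tuples: a finite chain of elementary moves. -/
def gEquiv {n m : ℕ} :
    (Fin n → Subgroup G) × (Fin m → G) → (Fin n → Subgroup G) × (Fin m → G) → Prop :=
  Relation.ReflTransGen gMove

/-- The family of factors `U₁,…,U_n, F(h₁),…,F(h_m)`. -/
def FF {n : ℕ} (m : ℕ) (U : Fin n → Subgroup G) : Fin n ⊕ Fin m → Type _
  | Sum.inl j => ↥(U j)
  | Sum.inr _ => FreeGroup PUnit

instance ffGroup {n : ℕ} (m : ℕ) (U : Fin n → Subgroup G) :
    (i : Fin n ⊕ Fin m) → Group (FF m U i)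
  | Sum.inl j => inferInstanceAs (Group ↥(U j))
  | Sum.inr _ => inferInstanceAs (Group (FreeGroup PUnit))

def ffHoms {n m : ℕ} (U : Fin n → Subgroup G) (H : Fin m → G) :
    (i : Fin n ⊕ Fin m) → FF m U i →* G
  | Sum.inl j => (U j).subtype
  | Sum.inr j => FreeGroup.lift fun _ => H j

/-- The canonical homomorphism `U₁ ∗ ⋯ ∗ U_n ∗ F(H) → G`. -/
def freeProdHom {n m : ℕ} (U : Fin n → Subgroup G) (H : Fin m → G) :
    Monoid.CoprodI (FF m U) →* G :=
  Monoid.CoprodI.lift (ffHoms U H)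

/-- `W = U₁ ∗ ⋯ ∗ U_n ∗ F(H)`: the canonical homomorphism is injective with image `W`. -/
def IsFreeProdDecomp {n m : ℕ} (U : Fin n → Subgroup G) (H : Fin m → G)
    (W : Subgroup G) : Prop :=
  Function.Injective (freeProdHom U H) ∧ (freeProdHom U H).range = W

/-- Minimality of the `G`-pair `(V; H)` (relative to a `1`-hyperbolic `G`-space `X`). -/
def PairMinimal (X : Type*) [MetricSpace X] [MulAction G X] {m : ℕ}
    (V : Subgroup G) (H : Fin m → G) : Prop :=
  ∀ (V' : Subgroup G) (H' : Fin m → G),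
    gEquiv ((fun _ : Fin 1 => V), H) ((fun _ : Fin 1 => V'), H') →
    (∑ i, lV X 1 V (H i)) ≤ (∑ i, lV X 1 V' (H' i)) + 1

/-- An elementary Nielsen move on tuples of elements of `G`. -/
def NielsenMove {k : ℕ} (g g' : Fin k → G) : Prop :=
  (∃ i : Fin k, (∀ j, j ≠ i → g' j = g j) ∧ g' i = (g i)⁻¹) ∨
  (∃ i j : Fin k, i ≠ j ∧ (∀ t, t ≠ i → g' t = g t) ∧ g' i = g i * g j) ∨
  (∃ i j : Fin k, i ≠ j ∧ g' = g ∘ Equiv.swap i j)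

/-- Nielsen equivalence: a finite chain of elementary Nielsen moves. -/
def NielsenEq {k : ℕ} : (Fin k → G) → (Fin k → G) → Prop :=
  Relation.ReflTransGen NielsenMove

/-- Word length of `g` with respect to the (symmetrized) generating set `S`. -/
def wordLength (S : Set G) (g : G) : ℕ :=
  sInf {n : ℕ | ∃ f : Fin n → G, (∀ i, f i ∈ S ∨ (f i)⁻¹ ∈ S) ∧ (List.ofFn f).prod = g}

/-- `(X, ι)` is a model of the Cayley graph `Γ(G,S)`. -/
def IsCayleyGraph (G : Type*) [Group G] (S : Set G) (X : Type*) [MetricSpace X]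
    [MulAction G X] (ι : G → X) : Prop :=
  IsometricAction G X ∧
  (∀ g h : G, ι (g * h) = g • ι h) ∧
  Function.Injective ι ∧
  GeodesicSpace X ∧
  (∀ g h : G, dist (ι g) (ι h) = (wordLength S (g⁻¹ * h) : ℝ)) ∧
  ∀ x : X, ∃ g h : G, wordLength S (g⁻¹ * h) ≤ 1 ∧
    ∃ s : Set X, IsGeodesicSegment s (ι g) (ι h) ∧ x ∈ s

/-- `H` is a quasiconvex subgroup (with respect to the Cayley graph model `(X, ι)`). -/
def QCSubgroup (X : Type*) [MetricSpace X] (ι : G → X) (H : Subgroup G) : Prop :=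
  ∃ ε : ℝ, 0 ≤ ε ∧ Quasiconvex ε (ι '' (H : Set G))

end GroupAction

/-- Every nontrivial element of finite order has finite centralizer. -/
def AlmostTorsionFree (G : Type*) [Group G] : Prop :=
  ∀ g : G, g ≠ 1 → IsOfFinOrder g → ((Subgroup.centralizer {g} : Subgroup G) : Set G).Finite

/-- `U` is nontrivial and admits no nontrivial free product decomposition. -/
def FreelyIndecomposable (U : Type*) [Group U] : Prop :=
  Nontrivial U ∧
    ¬ ∃ A B : Subgroup U, A ≠ ⊥ ∧ B ≠ ⊥ ∧
        Function.Bijective (Monoid.Coprod.lift A.subtype B.subtype)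

def InfiniteCyclic (U : Type*) [Group U] : Prop := Infinite U ∧ IsCyclic U

def VirtuallyCyclic (U : Type*) [Group U] : Prop :=
  ∃ H : Subgroup U, H.index ≠ 0 ∧ IsCyclic ↥H

def NonElementary (U : Type*) [Group U] : Prop := ¬ Finite U ∧ ¬ VirtuallyCyclic U

end KW

universe u

namespace KW

section Aux

variable {X : Type u} [MetricSpace X]

theorem GeodParam.distLeft {f : ℝ → X} {L : ℝ} {x y : X}
    (hf : GeodParam f L x y) {u : ℝ} (hu : u ∈ Set.Icc 0 L) : dist x (f u) = u := by
  have h := hf.2.2.2 0 ⟨le_refl _, hf.1⟩ u hu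
  rw [hf.2.1] at h
  rw [h, zero_sub, abs_neg, abs_of_nonneg hu.1]

theorem GeodParam.distRight {f : ℝ → X} {L : ℝ} {x y : X}
    (hf : GeodParam f L x y) {u : ℝ} (hu : u ∈ Set.Icc 0 L) : dist (f u) y = L - u := by
  have h := hf.2.2.2 u hu L ⟨hf.1, le_refl _⟩
  rw [hf.2.2.1] at h
  rw [h, abs_of_nonpos (by linarith [hu.2]), neg_sub]

theorem GeodParam.isSeg {f : ℝ → X} {L : ℝ} {x y : X} (hf : GeodParam f L x y) :
    IsGeodesicSegment (f '' Set.Icc 0 L) x y :=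
  ⟨L, f, hf.1, hf.2.1, hf.2.2.1, hf.2.2.2, rfl⟩

theorem GeodParam.rev {f : ℝ → X} {L : ℝ} {x y : X} (hf : GeodParam f L x y) :
    GeodParam (fun u => f (L - u)) L y x := by
  refine ⟨hf.1, by simp [hf.2.2.1], by simp [hf.2.1], ?_⟩
  intro u hu v hv
  have h := hf.2.2.2 (L - u) ⟨by linarith [hu.2], by linarith [hu.1]⟩
    (L - v) ⟨by linarith [hv.2], by linarith [hv.1]⟩
  simp only at h ⊢
  rw [h, show L - u - (L - v) = v - u from by ring, abs_sub_comm]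

theorem GeodParam.isSegRev {f : ℝ → X} {L : ℝ} {x y : X} (hf : GeodParam f L x y) :
    IsGeodesicSegment (f '' Set.Icc 0 L) y x := by
  have h := hf.rev.isSeg
  have himg : (fun u => f (L - u)) '' Set.Icc 0 L = f '' Set.Icc 0 L := by
    rw [show (fun u => f (L - u)) = f ∘ (fun u : ℝ => L - u) from rfl, Set.image_comp,
      Set.image_const_sub_Icc]
    simp
  rwa [himg] at h

theorem IsGeodesicSegment.param {s : Set X} {x y : X} (h : IsGeodesicSegment s x y) :
    ∃ m : ℝ → X, GeodParam m (dist x y) x y ∧ s = m '' Set.Icc 0 (dist x y) := by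
  obtain ⟨L, f, hL, h0, hLy, hiso, rfl⟩ := h
  have hd : dist x y = L := by
    have h2 := hiso 0 ⟨le_refl _, hL⟩ L ⟨hL, le_refl _⟩
    rw [h0, hLy] at h2
    rw [h2, zero_sub, abs_neg, abs_of_nonneg hL]
  exact ⟨f, by rw [hd]; exact ⟨hL, h0, hLy, hiso⟩, by rw [hd]⟩

theorem exists_geodParam (hG : GeodesicSpace X) (x y : X) :
    ∃ f : ℝ → X, GeodParam f (dist x y) x y := by
  obtain ⟨s, hs⟩ := hG x y
  obtain ⟨f, hf, -⟩ := hs.param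
  exact ⟨f, hf⟩

theorem thin1 (hhyp : DeltaHyperbolic 1 X) {x y z : X} {s₁ s₂ s₃ : Set X}
    (h₁ : IsGeodesicSegment s₁ x y) (h₂ : IsGeodesicSegment s₂ y z)
    (h₃ : IsGeodesicSegment s₃ x z) {p : X} (hp : p ∈ s₁) :
    ∃ q, (q ∈ s₂ ∨ q ∈ s₃) ∧ dist p q ≤ 1 := by
  obtain ⟨q, hq, hdq⟩ := hhyp.2 x y z s₁ s₂ s₃ h₁ h₂ h₃ p hp
  exact ⟨q, hq, hdq⟩

end Aux
section Key

variable {X : Type u} [MetricSpace X]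

theorem stepA (hhyp : DeltaHyperbolic 1 X) {A B : Set X} (hA : Quasiconvex 4 A)
    {a b : X} (ha : a ∈ A) (hb : b ∈ B)
    (hbridge : ∀ a' ∈ A, ∀ b' ∈ B, dist a b ≤ dist a' b' + 1)
    (hfar : 100 ≤ dist a b) {a' : X} (ha' : a' ∈ A) :
    dist a' a + dist a b - 16 ≤ dist a' b := by
  obtain ⟨g, hg⟩ := exists_geodParam hhyp.1 a b
  obtain ⟨h, hh⟩ := exists_geodParam hhyp.1 b a'
  obtain ⟨k, hk⟩ := exists_geodParam hhyp.1 a a'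
  have h7 : (7:ℝ) ∈ Set.Icc (0:ℝ) (dist a b) := ⟨by norm_num, by linarith⟩
  obtain ⟨q, hq, hdq⟩ := thin1 hhyp hg.isSeg hh.isSeg hk.isSeg ⟨7, h7, rfl⟩
  have hpb : dist (g 7) b = dist a b - 7 := hg.distRight h7
  have hpa : dist a (g 7) = 7 := hg.distLeft h7
  rcases hq with hq | hq
  · obtain ⟨v, hv, rfl⟩ := hq
    have e1 : dist b (h v) = v := hh.distLeft hv
    have e2 : dist (h v) a' = dist b a' - v := hh.distRight hv
    have t1 := dist_triangle b (h v) (g 7)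
    have t2 := dist_triangle a' (g 7) a
    have t3 := dist_triangle a' (h v) (g 7)
    have c5 : dist b (g 7) = dist (g 7) b := dist_comm _ _
    have c1 : dist a' b = dist b a' := dist_comm _ _
    have c2 : dist (g 7) a = dist a (g 7) := dist_comm _ _
    have c3 : dist a' (h v) = dist (h v) a' := dist_comm _ _
    have c4 : dist (h v) (g 7) = dist (g 7) (h v) := dist_comm _ _
    linarith
  · obtain ⟨v, hv, rfl⟩ := hq
    obtain ⟨a'', ha'', hd4⟩ := hA a ha a' ha' _ hk.isSeg (k v) ⟨v, hv, rfl⟩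
    have hbr := hbridge a'' ha'' b hb
    have t1 := dist_triangle a'' (k v) b
    have t2 := dist_triangle (k v) (g 7) b
    have c1 : dist a'' (k v) = dist (k v) a'' := dist_comm _ _
    have c3 : dist (k v) (g 7) = dist (g 7) (k v) := dist_comm _ _
    linarith

theorem star (hhyp : DeltaHyperbolic 1 X) {A B : Set X}
    (hA : Quasiconvex 4 A) (hB : Quasiconvex 4 B)
    {a b : X} (ha : a ∈ A) (hb : b ∈ B)
    (hbridge : ∀ a' ∈ A, ∀ b' ∈ B, dist a b ≤ dist a' b' + 1)
    (hfar : 100 ≤ dist a b) {a' b' : X} (ha' : a' ∈ A) (hb' : b' ∈ B) :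
    dist a' a + dist a b + dist b b' - 36 ≤ dist a' b' := by
  have hG := hhyp.1
  have hA1 : dist a' a + dist a b - 16 ≤ dist a' b := stepA hhyp hA ha hb hbridge hfar ha'
  have hba' : 99 ≤ dist b a' := by
    have hbr := hbridge a' ha' b hb
    have c : dist a' b = dist b a' := dist_comm _ _
    linarith
  obtain ⟨h, hh⟩ := exists_geodParam hG b a'
  have h9 : (9:ℝ) ∈ Set.Icc (0:ℝ) (dist b a') := ⟨by norm_num, by linarith⟩
  have hb9 : dist b (h 9) = 9 := hh.distLeft h9
  have h9a' : dist (h 9) a' = dist b a' - 9 := hh.distRight h9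
  -- substep : dist a (h 9) ≤ dist a b - 7
  have hsub : dist a (h 9) ≤ dist a b - 7 := by
    obtain ⟨k2, hk2⟩ := exists_geodParam hG a' a
    obtain ⟨k3, hk3⟩ := exists_geodParam hG b a
    obtain ⟨r, hr, hdr⟩ := thin1 hhyp hh.isSeg hk2.isSeg hk3.isSeg ⟨9, h9, rfl⟩
    rcases hr with hr | hr
    · obtain ⟨v, hv, rfl⟩ := hr
      obtain ⟨a'', ha'', hd4⟩ := hA a' ha' a ha _ hk2.isSeg (k2 v) ⟨v, hv, rfl⟩
      have hbr := hbridge a'' ha'' b hb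
      have t1 := dist_triangle a'' (k2 v) b
      have t2 := dist_triangle (k2 v) (h 9) b
      have c1 : dist a'' (k2 v) = dist (k2 v) a'' := dist_comm _ _
      have c2 : dist (h 9) b = dist b (h 9) := dist_comm _ _
      have c3 : dist (k2 v) (h 9) = dist (h 9) (k2 v) := dist_comm _ _
      linarith
    · obtain ⟨v, hv, rfl⟩ := hr
      have e1 : dist b (k3 v) = v := hk3.distLeft hv
      have e2 : dist (k3 v) a = dist b a - v := hk3.distRight hv
      have t1 := dist_triangle b (k3 v) (h 9)
      have t2 := dist_triangle a (k3 v) (h 9)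
      have c1 : dist b a = dist a b := dist_comm _ _
      have c2 : dist (h 9) (k3 v) = dist (k3 v) (h 9) := dist_comm _ _
      have c3 : dist a (k3 v) = dist (k3 v) a := dist_comm _ _
      linarith
  obtain ⟨m, hm⟩ := exists_geodParam hG a' b'
  obtain ⟨k4, hk4⟩ := exists_geodParam hG b b'
  obtain ⟨q, hq, hdq⟩ := thin1 hhyp hh.isSeg hm.isSeg hk4.isSeg ⟨9, h9, rfl⟩
  rcases hq with hq | hq
  · obtain ⟨v, hv, rfl⟩ := hq
    have e1 : dist a' (m v) = v := hm.distLeft hv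
    have e2 : dist (m v) b' = dist a' b' - v := hm.distRight hv
    have t1 := dist_triangle a' (m v) (h 9)
    have t2 := dist_triangle (h 9) (m v) b'
    have t3 := dist_triangle b b' (h 9)
    have t3' := dist_triangle b (h 9) b'
    have c1 : dist a' b = dist b a' := dist_comm _ _
    have c2 : dist (m v) (h 9) = dist (h 9) (m v) := dist_comm _ _
    have c3 : dist a' (h 9) = dist (h 9) a' := dist_comm _ _
    linarith
  · obtain ⟨v, hv, rfl⟩ := hq
    obtain ⟨b'', hb'', hd4⟩ := hB b hb b' hb' _ hk4.isSeg (k4 v) ⟨v, hv, rfl⟩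
    have hbr := hbridge a ha b'' hb''
    have t1 := dist_triangle a (h 9) b''
    have t2 := dist_triangle (h 9) (k4 v) b''
    linarith

end Key

theorem statement15 {X : Type u} [MetricSpace X] (hhyp : DeltaHyperbolic 1 X)
    (A B : Set X) (hAne : A.Nonempty) (hBne : B.Nonempty)
    (hA : Quasiconvex 4 A) (hB : Quasiconvex 4 B)
    (a b : X) (ha : a ∈ A) (hb : b ∈ B)
    (hbridge : ∀ a' ∈ A, ∀ b' ∈ B, dist a b ≤ dist a' b' + 1)
    (hfar : 100 ≤ dist a b) (a' : X) (ha' : a' ∈ A) (b' : X) (hb' : b' ∈ B) :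
    (∀ f₁ f₂ f₃ : ℝ → X,
      GeodParam f₁ (dist a' a) a' a → GeodParam f₂ (dist a b) a b →
      GeodParam f₃ (dist b b') b b' →
      QuasigeodesicOn 1 50 (concat3 f₁ f₂ f₃ (dist a' a) (dist a b)) 0
        (dist a' a + dist a b + dist b b') ∧
      ∀ s : Set X, IsGeodesicSegment s a' b' →
        HClose 50 ((concat3 f₁ f₂ f₃ (dist a' a) (dist a b)) ''
          Set.Icc 0 (dist a' a + dist a b + dist b b')) s) ∧
    (∀ R : ℝ, dist a' b' ≤ setDist A B + R →
      dist a a' ≤ R + 50 ∧ dist b b' ≤ R + 50) := by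
  have hG := hhyp.1
  have h1n : (0:ℝ) ≤ dist a' a := dist_nonneg
  have h3n : (0:ℝ) ≤ dist b b' := dist_nonneg
  have hA1 : dist a' a + dist a b - 16 ≤ dist a' b := stepA hhyp hA ha hb hbridge hfar ha'
  have hB1 : dist a b + dist b b' - 16 ≤ dist a b' := by
    have h := stepA hhyp hB hb ha (fun x hx y hy => by
      rw [dist_comm b a, dist_comm x y]; exact hbridge y hy x hx)
      (by rwa [dist_comm]) hb'
    have c1 : dist b' b = dist b b' := dist_comm _ _
    have c2 : dist b a = dist a b := dist_comm _ _
    have c3 : dist b' a = dist a b' := dist_comm _ _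
    linarith
  have hstar : dist a' a + dist a b + dist b b' - 36 ≤ dist a' b' :=
    star hhyp hA hB ha hb hbridge hfar ha' hb'
  have hubL : dist a' b' ≤ dist a' a + dist a b + dist b b' := by
    have t1 := dist_triangle a' a b'
    have t2 := dist_triangle a b b'
    linarith
  constructor
  · intro f₁ f₂ f₃ hf₁ hf₂ hf₃
    set L := dist a' a + dist a b + dist b b' with hL
    set σ := concat3 f₁ f₂ f₃ (dist a' a) (dist a b) with hσ
    have ev1 : ∀ t : ℝ, t ≤ dist a' a → σ t = f₁ t := by
      intro t ht; simp only [hσ, concat3, if_pos ht]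
    have ev2 : ∀ t : ℝ, dist a' a ≤ t → t ≤ dist a' a + dist a b →
        σ t = f₂ (t - dist a' a) := by
      intro t ht1 ht2
      rcases eq_or_lt_of_le ht1 with he | hlt
      · simp only [hσ, concat3, if_pos (le_of_eq he.symm)]
        rw [← he, sub_self, hf₁.2.2.1, hf₂.2.1]
      · simp only [hσ, concat3, if_neg (not_le.mpr hlt), if_pos ht2]
    have ev3 : ∀ t : ℝ, dist a' a + dist a b ≤ t →
        σ t = f₃ (t - dist a' a - dist a b) := by
      intro t ht
      have hn1 : ¬ t ≤ dist a' a := by push_neg; linarith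
      rcases eq_or_lt_of_le ht with he | hlt
      · simp only [hσ, concat3, if_neg hn1, if_pos (le_of_eq he.symm)]
        rw [← he, show dist a' a + dist a b - dist a' a = dist a b from by ring,
          show dist a b - dist a b = 0 from by ring,
          hf₂.2.2.1, hf₃.2.1]
      · simp only [hσ, concat3, if_neg hn1, if_neg (not_le.mpr hlt)]
    have key : ∀ s ∈ Set.Icc (0:ℝ) L, ∀ t ∈ Set.Icc (0:ℝ) L, s ≤ t →
        t - s ≤ dist (σ s) (σ t) + 50 := by
      intro s hs t ht hst
      rcases le_or_gt t (dist a' a) with h1 | h1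
      · rw [ev1 s (hst.trans h1), ev1 t h1,
          hf₁.2.2.2 s ⟨hs.1, hst.trans h1⟩ t ⟨ht.1, h1⟩,
          abs_of_nonpos (by linarith : s - t ≤ 0)]
        linarith
      rcases le_or_gt t (dist a' a + dist a b) with h2 | h2
      · rcases le_or_gt s (dist a' a) with h3 | h3
        · rw [ev1 s h3, ev2 t h1.le h2]
          have e1 : dist a' (f₁ s) = s := hf₁.distLeft ⟨hs.1, h3⟩
          have e2 : dist (f₂ (t - dist a' a)) b = dist a b - (t - dist a' a) :=
            hf₂.distRight ⟨by linarith, by linarith⟩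
          have t1 := dist_triangle a' (f₁ s) (f₂ (t - dist a' a))
          have t2 := dist_triangle a' (f₂ (t - dist a' a)) b
          linarith
        · rw [ev2 s h3.le (hst.trans h2), ev2 t h1.le h2,
            hf₂.2.2.2 (s - dist a' a) ⟨by linarith, by linarith⟩
              (t - dist a' a) ⟨by linarith, by linarith⟩,
            show s - dist a' a - (t - dist a' a) = s - t from by ring,
            abs_of_nonpos (by linarith : s - t ≤ 0)]
          linarith
      · rcases le_or_gt s (dist a' a) with h3 | h3
        · rw [ev1 s h3, ev3 t h2.le]
          have e1 : dist a' (f₁ s) = s := hf₁.distLeft ⟨hs.1, h3⟩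
          have e2 : dist (f₃ (t - dist a' a - dist a b)) b' =
              dist b b' - (t - dist a' a - dist a b) :=
            hf₃.distRight ⟨by linarith, by linarith [ht.2]⟩
          have t1 := dist_triangle a' (f₁ s) (f₃ (t - dist a' a - dist a b))
          have t2 := dist_triangle a' (f₃ (t - dist a' a - dist a b)) b'
          linarith
        rcases le_or_gt s (dist a' a + dist a b) with h4 | h4
        · rw [ev2 s h3.le h4, ev3 t h2.le]
          have e1 : dist a (f₂ (s - dist a' a)) = s - dist a' a :=
            hf₂.distLeft ⟨by linarith, by linarith⟩
          have e2 : dist (f₃ (t - dist a' a - dist a b)) b' =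
              dist b b' - (t - dist a' a - dist a b) :=
            hf₃.distRight ⟨by linarith, by linarith [ht.2]⟩
          have t1 := dist_triangle a (f₂ (s - dist a' a)) b'
          have t2 := dist_triangle (f₂ (s - dist a' a)) (f₃ (t - dist a' a - dist a b)) b'
          linarith
        · rw [ev3 s h4.le, ev3 t h2.le,
            hf₃.2.2.2 (s - dist a' a - dist a b) ⟨by linarith, by linarith [hs.2]⟩
              (t - dist a' a - dist a b) ⟨by linarith, by linarith [ht.2]⟩,
            show s - dist a' a - dist a b - (t - dist a' a - dist a b) = s - t from by ring,
            abs_of_nonpos (by linarith : s - t ≤ 0)]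
          linarith
    constructor
    · intro s hs t ht
      rcases le_total s t with h | h
      · rw [abs_of_nonpos (by linarith : s - t ≤ 0), one_mul]
        have := key s hs t ht h
        linarith
      · rw [abs_of_nonneg (by linarith : 0 ≤ s - t), one_mul, dist_comm]
        have := key t ht s hs h
        linarith
    · intro s hseg
      obtain ⟨m, hm, rfl⟩ := hseg.param
      obtain ⟨g₁, hg₁⟩ := exists_geodParam hG a' b
      obtain ⟨g₂, hg₂⟩ := exists_geodParam hG a b'
      have hub1 : dist a' b ≤ dist a' a + dist a b := dist_triangle _ _ _
      have hub2 : dist a b' ≤ dist a b + dist b b' := dist_triangle _ _ _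
      constructor
      · rintro p ⟨t, ht, rfl⟩
        rcases le_or_gt t (dist a' a) with h1 | h1
        · -- piece 1
          rw [ev1 t h1]
          have htm : t ∈ Set.Icc 0 (dist a' b') := ⟨ht.1, by linarith⟩
          have hza' : dist a' (m t) = t := hm.distLeft htm
          have hzb' : dist (m t) b' = dist a' b' - t := hm.distRight htm
          obtain ⟨w, hw, hdw⟩ := thin1 hhyp hm.isSeg hg₂.isSegRev hf₁.isSeg ⟨t, htm, rfl⟩
          refine ⟨m t, ⟨t, htm, rfl⟩, ?_⟩
          rcases hw with hw | hw
          · obtain ⟨v, hv, rfl⟩ := hw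
            have e1 : dist a (g₂ v) = v := hg₂.distLeft hv
            have e2 : dist (g₂ v) b' = dist a b' - v := hg₂.distRight hv
            have e3 : dist (f₁ t) a = dist a' a - t := hf₁.distRight ⟨ht.1, h1⟩
            have t1 := dist_triangle (m t) (g₂ v) b'
            have t2 := dist_triangle (f₁ t) (g₂ v) (m t)
            have t3 := dist_triangle (f₁ t) a (g₂ v)
            have c1 : dist (g₂ v) (m t) = dist (m t) (g₂ v) := dist_comm _ _
            linarith
          · obtain ⟨v, hv, rfl⟩ := hw
            have e1 : dist a' (f₁ v) = v := hf₁.distLeft hv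
            have t1 := dist_triangle a' (m t) (f₁ v)
            have t2 := dist_triangle a' (f₁ v) (m t)
            have e4 := hf₁.2.2.2 t ⟨ht.1, h1⟩ v hv
            have c1 : dist (m t) (f₁ v) = dist (f₁ v) (m t) := dist_comm _ _
            have t3 := dist_triangle (f₁ t) (f₁ v) (m t)
            have habs : |t - v| ≤ 1 := abs_le.mpr ⟨by linarith, by linarith⟩
            rw [e4] at t3
            linarith
        rcases le_or_gt t (dist a' a + dist a b) with h2 | h2
        · -- piece 2
          rw [ev2 t h1.le h2]
          have e6 : dist a (f₂ (t - dist a' a)) = t - dist a' a :=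
            hf₂.distLeft ⟨by linarith, by linarith⟩
          have e7 : dist (f₂ (t - dist a' a)) b = dist a b - (t - dist a' a) :=
            hf₂.distRight ⟨by linarith, by linarith⟩
          rcases le_or_gt t (dist a' a + 50) with h50 | h50
          · -- v ≤ 50
            have htm : t ∈ Set.Icc 0 (dist a' b') := ⟨ht.1, by linarith⟩
            have hza' : dist a' (m t) = t := hm.distLeft htm
            have hzb' : dist (m t) b' = dist a' b' - t := hm.distRight htm
            refine ⟨m t, ⟨t, htm, rfl⟩, ?_⟩
            obtain ⟨w, hw, hdw⟩ := thin1 hhyp hm.isSeg hf₃.isSegRev hg₁.isSeg ⟨t, htm, rfl⟩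
            rcases hw with hw | hw
            · exfalso
              obtain ⟨w', hw', rfl⟩ := hw
              have e1 : dist (f₃ w') b' = dist b b' - w' := hf₃.distRight hw'
              have t1 := dist_triangle (m t) (f₃ w') b'
              linarith [hw'.1]
            · obtain ⟨w', hw', rfl⟩ := hw
              have e1 : dist a' (g₁ w') = w' := hg₁.distLeft hw'
              have e2 : dist (g₁ w') b = dist a' b - w' := hg₁.distRight hw'
              have tw1 := dist_triangle a' (m t) (g₁ w')
              have tw2 := dist_triangle a' (g₁ w') (m t)
              have cw : dist (m t) (g₁ w') = dist (g₁ w') (m t) := dist_comm _ _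
              obtain ⟨r, hr, hdr⟩ := thin1 hhyp hg₁.isSeg hf₂.isSegRev hf₁.isSeg ⟨w', hw', rfl⟩
              rcases hr with hr | hr
              · obtain ⟨v'', hv'', rfl⟩ := hr
                have e3 : dist (f₂ v'') b = dist a b - v'' := hf₂.distRight hv''
                have e4 := hf₂.2.2.2 (t - dist a' a) ⟨by linarith, by linarith⟩ v'' hv''
                have t3 := dist_triangle (f₂ (t - dist a' a)) (f₂ v'') (m t)
                have t4 := dist_triangle (g₁ w') (f₂ v'') b
                have t5 := dist_triangle (f₂ v'') (g₁ w') b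
                have t6 := dist_triangle (f₂ v'') (g₁ w') (m t)
                have c2 : dist (f₂ v'') (g₁ w') = dist (g₁ w') (f₂ v'') := dist_comm _ _
                have habs : |t - dist a' a - v''| ≤ 18 :=
                  abs_le.mpr ⟨by linarith, by linarith⟩
                rw [e4] at t3
                linarith
              · obtain ⟨r', hr', rfl⟩ := hr
                have e3 : dist a' (f₁ r') = r' := hf₁.distLeft hr'
                have e5 : dist (f₁ r') a = dist a' a - r' := hf₁.distRight hr'
                have t7 := dist_triangle a' (f₁ r') (g₁ w')
                have c4 : dist (g₁ w') (f₁ r') = dist (f₁ r') (g₁ w') := dist_comm _ _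
                have t8 := dist_triangle (f₂ (t - dist a' a)) (f₁ r') (m t)
                have t9 := dist_triangle (f₂ (t - dist a' a)) a (f₁ r')
                have t10 := dist_triangle (f₁ r') (g₁ w') (m t)
                have c5 : dist (f₂ (t - dist a' a)) a = dist a (f₂ (t - dist a' a)) :=
                  dist_comm _ _
                have c6 : dist a (f₁ r') = dist (f₁ r') a := dist_comm _ _
                linarith [hr'.2]
          · -- v > 50
            have hum : dist a' b' - (dist a' a + dist a b + dist b b' - t) ∈
                Set.Icc 0 (dist a' b') := ⟨by linarith, by linarith [ht.2]⟩
            set u := dist a' b' - (dist a' a + dist a b + dist b b' - t) with hu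
            have hza' : dist a' (m u) = u := hm.distLeft hum
            have hzb' : dist (m u) b' = dist a' b' - u := hm.distRight hum
            refine ⟨m u, ⟨u, hum, rfl⟩, ?_⟩
            obtain ⟨w, hw, hdw⟩ := thin1 hhyp hm.isSeg hg₂.isSegRev hf₁.isSeg ⟨u, hum, rfl⟩
            rcases hw with hw | hw
            · obtain ⟨w', hw', rfl⟩ := hw
              have e1 : dist a (g₂ w') = w' := hg₂.distLeft hw'
              have e2 : dist (g₂ w') b' = dist a b' - w' := hg₂.distRight hw'
              have t11 := dist_triangle (m u) (g₂ w') b'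
              have t11' := dist_triangle (g₂ w') (m u) b'
              have c7 : dist (g₂ w') (m u) = dist (m u) (g₂ w') := dist_comm _ _
              obtain ⟨r, hr, hdr⟩ := thin1 hhyp hg₂.isSeg hf₃.isSegRev hf₂.isSeg ⟨w', hw', rfl⟩
              rcases hr with hr | hr
              · obtain ⟨r', hr', rfl⟩ := hr
                have e3 : dist (f₃ r') b' = dist b b' - r' := hf₃.distRight hr'
                have e3' : dist b (f₃ r') = r' := hf₃.distLeft hr'
                have t8 := dist_triangle (f₂ (t - dist a' a)) (f₃ r') (m u)
                have t9 := dist_triangle (f₂ (t - dist a' a)) b (f₃ r')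
                have t10 := dist_triangle (f₃ r') (g₂ w') (m u)
                have t12 := dist_triangle (g₂ w') (f₃ r') b'
                have c8 : dist (f₃ r') (g₂ w') = dist (g₂ w') (f₃ r') := dist_comm _ _
                have c9 : dist (f₂ (t - dist a' a)) b = dist b (f₂ (t - dist a' a)) :=
                  dist_comm _ _
                linarith [hr'.1]
              · obtain ⟨v'', hv'', rfl⟩ := hr
                have e3 : dist a (f₂ v'') = v'' := hf₂.distLeft hv''
                have t12 := dist_triangle a (g₂ w') (f₂ v'')
                have t13 := dist_triangle a (f₂ v'') (g₂ w')
                have c10 : dist (g₂ w') (f₂ v'') = dist (f₂ v'') (g₂ w') := dist_comm _ _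
                have e4 := hf₂.2.2.2 (t - dist a' a) ⟨by linarith, by linarith⟩ v'' hv''
                have t3 := dist_triangle (f₂ (t - dist a' a)) (f₂ v'') (m u)
                have t6 := dist_triangle (f₂ v'') (g₂ w') (m u)
                have habs : |t - dist a' a - v''| ≤ 18 :=
                  abs_le.mpr ⟨by linarith, by linarith⟩
                rw [e4] at t3
                linarith
            · exfalso
              obtain ⟨w', hw', rfl⟩ := hw
              have e1 : dist a' (f₁ w') = w' := hf₁.distLeft hw'
              have t1 := dist_triangle a' (f₁ w') (m u)
              have c1 : dist (m u) (f₁ w') = dist (f₁ w') (m u) := dist_comm _ _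
              linarith [hw'.2]
        · -- piece 3
          rw [ev3 t h2.le]
          have hvm : t - dist a' a - dist a b ∈ Set.Icc 0 (dist b b') :=
            ⟨by linarith, by linarith [ht.2]⟩
          have e5 : dist b (f₃ (t - dist a' a - dist a b)) = t - dist a' a - dist a b :=
            hf₃.distLeft hvm
          have e5' : dist (f₃ (t - dist a' a - dist a b)) b' =
              dist b b' - (t - dist a' a - dist a b) := hf₃.distRight hvm
          have hum : dist a' b' - (dist a' a + dist a b + dist b b' - t) ∈
              Set.Icc 0 (dist a' b') := ⟨by linarith, by linarith [ht.2]⟩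
          set u := dist a' b' - (dist a' a + dist a b + dist b b' - t) with hu
          have hza' : dist a' (m u) = u := hm.distLeft hum
          have hzb' : dist (m u) b' = dist a' b' - u := hm.distRight hum
          refine ⟨m u, ⟨u, hum, rfl⟩, ?_⟩
          obtain ⟨w, hw, hdw⟩ := thin1 hhyp hm.isSeg hf₃.isSegRev hg₁.isSeg ⟨u, hum, rfl⟩
          rcases hw with hw | hw
          · obtain ⟨w', hw', rfl⟩ := hw
            have e1 : dist (f₃ w') b' = dist b b' - w' := hf₃.distRight hw'
            have t1 := dist_triangle (m u) (f₃ w') b'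
            have t2 := dist_triangle (f₃ w') (m u) b'
            have c1 : dist (f₃ w') (m u) = dist (m u) (f₃ w') := dist_comm _ _
            have e4 := hf₃.2.2.2 (t - dist a' a - dist a b) hvm w' hw'
            have t3 := dist_triangle (f₃ (t - dist a' a - dist a b)) (f₃ w') (m u)
            have habs : |t - dist a' a - dist a b - w'| ≤ 1 :=
              abs_le.mpr ⟨by linarith, by linarith⟩
            rw [e4] at t3
            linarith
          · obtain ⟨w', hw', rfl⟩ := hw
            have e1 : dist a' (g₁ w') = w' := hg₁.distLeft hw'
            have e2 : dist (g₁ w') b = dist a' b - w' := hg₁.distRight hw'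
            have tw2 := dist_triangle a' (g₁ w') (m u)
            have cw : dist (m u) (g₁ w') = dist (g₁ w') (m u) := dist_comm _ _
            have tA := dist_triangle (f₃ (t - dist a' a - dist a b)) (g₁ w') (m u)
            have tB := dist_triangle (f₃ (t - dist a' a - dist a b)) b (g₁ w')
            have cB : dist (f₃ (t - dist a' a - dist a b)) b =
                dist b (f₃ (t - dist a' a - dist a b)) := dist_comm _ _
            have cC : dist b (g₁ w') = dist (g₁ w') b := dist_comm _ _
            linarith
      · rintro z ⟨u, hu, rfl⟩
        obtain ⟨w, hw, hdw⟩ := thin1 hhyp hm.isSeg hg₂.isSegRev hf₁.isSeg ⟨u, hu, rfl⟩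
        rcases hw with hw | hw
        · obtain ⟨v, hv, rfl⟩ := hw
          obtain ⟨r, hr, hdr⟩ := thin1 hhyp hg₂.isSeg hf₃.isSegRev hf₂.isSeg ⟨v, hv, rfl⟩
          rcases hr with hr | hr
          · obtain ⟨r', hr', rfl⟩ := hr
            refine ⟨σ (dist a' a + dist a b + r'),
              ⟨dist a' a + dist a b + r', ⟨by linarith [hr'.1], by linarith [hr'.2]⟩, rfl⟩, ?_⟩
            rw [ev3 _ (by linarith [hr'.1]),
              show dist a' a + dist a b + r' - dist a' a - dist a b = r' from by ring]
            have t1 := dist_triangle (f₃ r') (g₂ v) (m u)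
            have c1 : dist (f₃ r') (g₂ v) = dist (g₂ v) (f₃ r') := dist_comm _ _
            have c2 : dist (g₂ v) (m u) = dist (m u) (g₂ v) := dist_comm _ _
            linarith
          · obtain ⟨r', hr', rfl⟩ := hr
            refine ⟨σ (dist a' a + r'),
              ⟨dist a' a + r', ⟨by linarith [hr'.1], by linarith [hr'.2]⟩, rfl⟩, ?_⟩
            rw [ev2 _ (by linarith [hr'.1]) (by linarith [hr'.2]),
              show dist a' a + r' - dist a' a = r' from by ring]
            have t1 := dist_triangle (f₂ r') (g₂ v) (m u)
            have c1 : dist (f₂ r') (g₂ v) = dist (g₂ v) (f₂ r') := dist_comm _ _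
            have c2 : dist (g₂ v) (m u) = dist (m u) (g₂ v) := dist_comm _ _
            linarith
        · obtain ⟨v, hv, rfl⟩ := hw
          refine ⟨σ v, ⟨v, ⟨hv.1, by linarith [hv.2]⟩, rfl⟩, ?_⟩
          rw [ev1 v hv.2, dist_comm]
          linarith
  · intro R hR
    have hsd : setDist A B ≤ dist a b := by
      apply csInf_le
      · exact ⟨0, by rintro r ⟨x, hx, y, hy, rfl⟩; exact dist_nonneg⟩
      · exact ⟨a, ha, b, hb, rfl⟩
    have c1 : dist a a' = dist a' a := dist_comm _ _
    constructor <;> linarith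

end KW
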